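/- Minimality of elastification: Let A be a deterministic partial Moore machine over Π with distinguished letter b and outputs in a join-semilattice, and let A_el be its elastification. For any elastic Moore machine B such that for every word w the output of A on w is ≤ the output of B on w (whenever A's run is defined, B's run is defined and dominates), the output of A_el on every word w is ≤ the output of B on w. In particular, A_el computes the least elastic over-approximation of A. -/

import Mathlib

/-- A deterministic Moore machine with a partial transition function over alphabet `A`
and outputs in `F`. -/
structure PMoore (A F : Type) where
  Q : Type
  [dec : DecidableEq Q]
  [fin : Fintype Q]
  init : Q
  step : Q → A → Option Q
  out : Q → F

attribute [instance] PMoore.dec PMoore.fin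

/-- The (partial) run of the machine from a state on a word. -/
def PMoore.runFrom {A F : Type} (M : PMoore A F) : M.Q → List A → Option M.Q
  | q, [] => some q
  | q, a :: w => (M.step q a).bind fun q' => M.runFrom q' w

/-- The (partial) output of the machine on a word. -/
def PMoore.output {A F : Type} (M : PMoore A F) (w : List A) : Option F :=
  (M.runFrom M.init w).map M.out

/-- Elastic: every defined `b`-transition is a self-loop. -/
def PMoore.Elastic {A F : Type} (M : PMoore A F) (b : A) : Prop :=
  ∀ q q', M.step q b = some q' → q' = q

/-- `R_b(S)`: the set of states reachable from `S` by a (possibly empty) sequence of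
`b`-transitions. -/
noncomputable def PMoore.Rb {A F : Type} (M : PMoore A F) (b : A) (S : Finset M.Q) :
    Finset M.Q := by
  classical
  exact Finset.univ.filter fun q' =>
    ∃ q ∈ S, Relation.ReflTransGen (fun x y => M.step x b = some y) q q'

/-- The transition function of the elastification: the `b`-closure subset construction.
On `a ≠ b` a set `S` goes to `R_b(δ(S,a))` (undefined if `δ(S,a)` is empty); on `b`
the set `S` maps to itself provided some state of `S` has a `b`-transition. -/
noncomputable def PMoore.elStep {A F : Type} [DecidableEq A] (M : PMoore A F) (b : A)
    (S : Finset M.Q) (a : A) : Option (Finset M.Q) := by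
  classical
  exact if a = b then
    if ∃ q ∈ S, (M.step q b).isSome then some S else none
  else
    let T : Finset M.Q := Finset.univ.filter fun q' => ∃ q ∈ S, M.step q a = some q'
    if T.Nonempty then some (M.Rb b T) else none

/-- The run of the elastification from a set-state. -/
noncomputable def PMoore.elRunFrom {A F : Type} [DecidableEq A] (M : PMoore A F) (b : A) :
    Finset M.Q → List A → Option (Finset M.Q)
  | S, [] => some S
  | S, a :: w => (M.elStep b S a).bind fun S' => M.elRunFrom b S' w

/-- The run of the elastification on a word, starting from the initial set `R_b({q₀})`. -/
noncomputable def PMoore.elRun {A F : Type} [DecidableEq A] (M : PMoore A F) (b : A)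
    (w : List A) : Option (Finset M.Q) :=
  M.elRunFrom b (M.Rb b {M.init}) w

/-- The output of a set-state of the elastification: the join of the outputs of its
elements (junk value on the empty set). -/
noncomputable def PMoore.joinOut {A F : Type} [SemilatticeSup F] (M : PMoore A F)
    (S : Finset M.Q) : F :=
  if h : S.Nonempty then S.sup' h M.out else M.out M.init

/-- The (partial) output of the elastification on a word. -/
noncomputable def PMoore.elOutput {A F : Type} [DecidableEq A] [SemilatticeSup F]
    (M : PMoore A F) (b : A) (w : List A) : Option F :=
  (M.elRun b w).map M.joinOut

/-!
Call two words equivalent when they agree after erasing every `b`. Since the `b`-transitions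
of the elastic machine `B` are self-loops, `B` reaches the same state on equivalent words.
By induction on `w`, every state in the set reached by `A_el` on `w` is reached by `A` on a word
equivalent to `w`, and `B`'s run on `w` is defined: a letter applicable to that set is applicable
in `A` after such a word, so `B`, which dominates `A`, can take it from the state it shares with
`w`. Each output joined into `A_el`'s output is therefore bounded by the output of `B`'s single
state after `w`.
-/

namespace PMoore

variable {A F : Type}

section Runs

variable (M : PMoore A F) {b : A}

theorem runFrom_append (q : M.Q) (u v : List A) :
    M.runFrom q (u ++ v) = (M.runFrom q u).bind (M.runFrom · v) := by
  induction u generalizing q with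
  | nil => rfl
  | cons a u ih =>
    simp only [List.cons_append, runFrom, ih, Option.bind_assoc]

theorem runFrom_append_singleton (q : M.Q) (u : List A) (a : A) :
    M.runFrom q (u ++ [a]) = (M.runFrom q u).bind (M.step · a) := by
  simp [runFrom_append, runFrom]

theorem runFrom_replicate_of_reflTransGen {q q' : M.Q}
    (h : Relation.ReflTransGen (fun x y => M.step x b = some y) q q') :
    ∃ n, M.runFrom q (List.replicate n b) = some q' := by
  induction h with
  | refl => exact ⟨0, rfl⟩
  | tail _ hstep ih =>
    obtain ⟨n, hn⟩ := ih
    exact ⟨n + 1, by rw [List.replicate_succ', runFrom_append_singleton, hn, Option.bind_some,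
      hstep]⟩

theorem mem_Rb {S : Finset M.Q} {q' : M.Q} :
    q' ∈ M.Rb b S ↔ ∃ q ∈ S, Relation.ReflTransGen (fun x y => M.step x b = some y) q q' := by
  simp [Rb]

theorem subset_Rb (b : A) (S : Finset M.Q) : S ⊆ M.Rb b S :=
  fun q hq => M.mem_Rb.mpr ⟨q, hq, .refl⟩

theorem exists_runFrom_replicate_of_mem_Rb {S : Finset M.Q} {q' : M.Q} (h : q' ∈ M.Rb b S) :
    ∃ q ∈ S, ∃ n, M.runFrom q (List.replicate n b) = some q' := by
  obtain ⟨q, hq, hrt⟩ := M.mem_Rb.mp h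
  exact ⟨q, hq, M.runFrom_replicate_of_reflTransGen hrt⟩

end Runs

theorem Elastic.runFrom_filter {M : PMoore A F} {b : A} [DecidableEq A] (hM : M.Elastic b)
    {q q' : M.Q} {w : List A} (h : M.runFrom q w = some q') :
    M.runFrom q (w.filter (· ≠ b)) = some q' := by
  induction w generalizing q with
  | nil => exact h
  | cons a w ih =>
    obtain ⟨m, hm, hrun⟩ := Option.bind_eq_some_iff.mp h
    by_cases hab : a = b
    · subst hab
      rw [hM q m hm] at hrun
      simpa using ih hrun
    · simpa [hab, runFrom, hm] using ih hrun

theorem Elastic.runFrom_eq_of_filter_eq {M : PMoore A F} {b : A} [DecidableEq A]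
    (hM : M.Elastic b) {q p p' : M.Q} {v w : List A}
    (hvw : v.filter (· ≠ b) = w.filter (· ≠ b))
    (hv : M.runFrom q v = some p) (hw : M.runFrom q w = some p') : p = p' := by
  have := hM.runFrom_filter hw
  rwa [← hvw, hM.runFrom_filter hv, Option.some_inj] at this

section Elastification

variable [DecidableEq A] (M : PMoore A F) (b : A)

theorem elRun_append_singleton (u : List A) (a : A) :
    M.elRun b (u ++ [a]) = (M.elRun b u).bind (M.elStep b · a) := by
  unfold elRun
  generalize M.Rb b {M.init} = S
  induction u generalizing S with
  | nil => simp [elRunFrom]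
  | cons c u ih => simp only [List.cons_append, elRunFrom, ih, Option.bind_assoc]

variable {M b}

theorem exists_step_of_elStep {S S' : Finset M.Q} {a : A} (h : M.elStep b S a = some S') :
    ∃ q ∈ S, ∃ q', M.step q a = some q' := by
  dsimp only [elStep] at h
  split_ifs at h with hab hex hT
  · obtain ⟨q, hq, hsome⟩ := hex
    exact ⟨q, hq, Option.isSome_iff_exists.mp (hab ▸ hsome)⟩
  · obtain ⟨q', hq'⟩ := hT
    obtain ⟨q, hq, hstep⟩ := (Finset.mem_filter.mp hq').2
    exact ⟨q, hq, q', hstep⟩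

theorem elStep_nonempty {S S' : Finset M.Q} {a : A} (hS : S.Nonempty)
    (h : M.elStep b S a = some S') : S'.Nonempty := by
  dsimp only [elStep] at h
  split_ifs at h with hab hex hT
  · exact Option.some_inj.mp h ▸ hS
  · exact Option.some_inj.mp h ▸ hT.mono (M.subset_Rb b _)

theorem exists_runFrom_of_mem_elStep {S S' : Finset M.Q} {a : A} {q' : M.Q}
    (h : M.elStep b S a = some S') (hq' : q' ∈ S') :
    ∃ q ∈ S, ∃ v : List A, v.filter (· ≠ b) = [a].filter (· ≠ b) ∧
      M.runFrom q v = some q' := by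
  dsimp only [elStep] at h
  split_ifs at h with hab hex hT
  · obtain rfl := Option.some_inj.mp h
    exact ⟨q', hq', [], by simp [hab], rfl⟩
  · obtain rfl := Option.some_inj.mp h
    obtain ⟨t, ht, n, hrun⟩ := M.exists_runFrom_replicate_of_mem_Rb hq'
    obtain ⟨q, hq, hstep⟩ := (Finset.mem_filter.mp ht).2
    refine ⟨q, hq, a :: List.replicate n b, ?_, by simpa [runFrom, hstep] using hrun⟩
    simp [hab]

theorem elRun_nonempty {w : List A} {S : Finset M.Q} (h : M.elRun b w = some S) :
    S.Nonempty := by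
  induction w using List.reverseRecOn generalizing S with
  | nil =>
    obtain rfl := Option.some_inj.mp h.symm
    exact ⟨M.init, M.subset_Rb b _ (Finset.mem_singleton_self _)⟩
  | append_singleton u a ih =>
    rw [elRun_append_singleton, Option.bind_eq_some_iff] at h
    obtain ⟨S₀, hS₀, hstep⟩ := h
    exact elStep_nonempty (ih hS₀) hstep

theorem exists_runFrom_of_mem_elRun {w : List A} {S : Finset M.Q} {q : M.Q}
    (h : M.elRun b w = some S) (hq : q ∈ S) :
    ∃ v : List A, v.filter (· ≠ b) = w.filter (· ≠ b) ∧ M.runFrom M.init v = some q := by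
  induction w using List.reverseRecOn generalizing S q with
  | nil =>
    obtain rfl := Option.some_inj.mp h.symm
    obtain ⟨q₀, hq₀, n, hrun⟩ := M.exists_runFrom_replicate_of_mem_Rb hq
    rw [Finset.mem_singleton.mp hq₀] at hrun
    exact ⟨_, by simp, hrun⟩
  | append_singleton u a ih =>
    rw [elRun_append_singleton, Option.bind_eq_some_iff] at h
    obtain ⟨S₀, hS₀, hstep⟩ := h
    obtain ⟨q₀, hq₀, v', hv', hrun'⟩ := exists_runFrom_of_mem_elStep hstep hq
    obtain ⟨v₀, hv₀, hrun₀⟩ := ih hS₀ hq₀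
    refine ⟨v₀ ++ v', by rw [List.filter_append, List.filter_append, hv₀, hv'], ?_⟩
    rw [runFrom_append, hrun₀, Option.bind_some, hrun']

end Elastification

section Domination

variable [DecidableEq A] [SemilatticeSup F] {M B : PMoore A F} {b : A}

theorem exists_runFrom_of_elRun (hB : B.Elastic b)
    (hdom : ∀ (w : List A) (q : M.Q), M.runFrom M.init w = some q →
      ∃ p : B.Q, B.runFrom B.init w = some p ∧ M.out q ≤ B.out p)
    {w : List A} {S : Finset M.Q} (h : M.elRun b w = some S) :
    ∃ p, B.runFrom B.init w = some p := by
  induction w using List.reverseRecOn generalizing S with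
  | nil => exact ⟨B.init, rfl⟩
  | append_singleton u a ih =>
    rw [elRun_append_singleton, Option.bind_eq_some_iff] at h
    obtain ⟨S₀, hS₀, hstep⟩ := h
    obtain ⟨p, hp⟩ := ih hS₀
    obtain ⟨q, hq, q', hqq'⟩ := exists_step_of_elStep hstep
    obtain ⟨v, hv, hrun⟩ := exists_runFrom_of_mem_elRun hS₀ hq
    have hMrun : M.runFrom M.init (v ++ [a]) = some q' := by
      rw [runFrom_append_singleton, hrun, Option.bind_some, hqq']
    obtain ⟨p', hp', -⟩ := hdom _ _ hMrun
    rw [runFrom_append_singleton, Option.bind_eq_some_iff] at hp'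
    obtain ⟨pv, hpv, hpvp'⟩ := hp'
    obtain rfl := hB.runFrom_eq_of_filter_eq hv hpv hp
    exact ⟨p', by rw [runFrom_append_singleton, hp, Option.bind_some, hpvp']⟩

end Domination

end PMoore

/-- Minimality of elastification: if an elastic machine `B` pointwise dominates `A`
(whenever `A`'s run is defined, `B`'s run is defined with output at least `A`'s), then
`B` pointwise dominates the elastification `A_el` as well; `A_el` computes the least
elastic over-approximation of `A`. -/
theorem stmt7 {A F : Type} [DecidableEq A] [SemilatticeSup F] (M B : PMoore A F) (b : A)
    (hB : B.Elastic b)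
    (hdom : ∀ (w : List A) (q : M.Q), M.runFrom M.init w = some q →
      ∃ p : B.Q, B.runFrom B.init w = some p ∧ M.out q ≤ B.out p) :
    ∀ (w : List A) (S : Finset M.Q), M.elRun b w = some S →
      ∃ p : B.Q, B.runFrom B.init w = some p ∧ M.joinOut S ≤ B.out p := by
  intro w S hS
  obtain ⟨p, hp⟩ := PMoore.exists_runFrom_of_elRun hB hdom hS
  have hne := PMoore.elRun_nonempty hS
  refine ⟨p, hp, ?_⟩
  rw [PMoore.joinOut, dif_pos hne]
  refine Finset.sup'_le hne _ fun q hq => ?_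
  obtain ⟨v, hv, hrun⟩ := PMoore.exists_runFrom_of_mem_elRun hS hq
  obtain ⟨pq, hpq, hle⟩ := hdom v q hrun
  exact hB.runFrom_eq_of_filter_eq hv hpq hp ▸ hle
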